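/- Proposition (second recurrence relation). For all n ≥ t and k ≥ 1, M n k = Σ_{j=0}^{ℓ} ( Σ_{m=0}^{j} a (n−m) (j−m) · ∏_{i=0}^{m−1} b (n−i) ) · M (n−t−j) (k−1) + Σ_{j=0}^{n} ( Σ_{m=0}^{ℓ} a (n−j−m−1) (ℓ−m) · ∏_{i=0}^{j+m} b (n−i) ) · M (n−t−ℓ−j−1) (k−1), where the empty product ∏_{i=0}^{−1} b (n−i) equals 1, and any summand whose M-index would be negative is taken to be 0 (in all remaining summands every index of a and b is nonnegative). -/

import Mathlib

open Finset

/-- The weighted lattice-path matrix `M`: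
`M n 0 = ∏_{i=1}^n b i`, `M n k = 0` for `k ≥ 1` and `n < t`, and
`M n k = Σ_{i=0}^{ℓ} (a n i) * M (n-t-i) (k-1) + (b n) * M (n-1) k`
for `n ≥ t`, `k ≥ 1`, where summands with a negative first index vanish. -/
def latticeM {R : Type*} [CommRing R] (t ℓ : ℕ) (a : ℕ → ℕ → R) (b : ℕ → R) :
    ℕ → ℕ → R
  | n, 0 => ∏ i ∈ Finset.Icc 1 n, b i
  | 0, k + 1 => if t = 0 then a 0 0 * latticeM t ℓ a b 0 k else 0
  | n + 1, k + 1 =>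
      if n + 1 < t then 0
      else (∑ i ∈ Finset.range (ℓ + 1),
              if t + i ≤ n + 1 then a (n + 1) i * latticeM t ℓ a b (n + 1 - t - i) k
              else 0)
        + b (n + 1) * latticeM t ℓ a b n (k + 1)
  termination_by n k => (k, n)

/-! Unrolling the first recurrence along its `b`-term, a path from `n` down to `n - t - r`
takes `p` unit steps of weight `b`, and then one step of length `t + (r - p)`, `r - p ≤ ℓ`, of
weight `a`. Collecting these paths gives `M n k = Σ_r c n r * M (n - t - r) (k - 1)` with
`c = latticeCoeff ℓ a b`, and `c (n + 1) (r + 1) = a (n + 1) (r + 1) + b (n + 1) * c n r`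
(the `a`-term only for `r < ℓ`) makes the identity an induction on `n`. The two inner sums of the statement are `c n r` for
`r ≤ ℓ` and for `r = ℓ + j + 1`. -/

section Coefficients

variable {R : Type*} [CommRing R] (ℓ : ℕ) (a : ℕ → ℕ → R) (b : ℕ → R)

def latticeCoeff (n r : ℕ) : R :=
  ∑ p ∈ range (r + 1), (if r - p ≤ ℓ then a (n - p) (r - p) else 0) * ∏ i ∈ range p, b (n - i)

lemma latticeCoeff_zero (n : ℕ) : latticeCoeff ℓ a b n 0 = a n 0 := by
  simp [latticeCoeff]

lemma latticeCoeff_succ_succ (n r : ℕ) :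
    latticeCoeff ℓ a b (n + 1) (r + 1) =
      (if r + 1 ≤ ℓ then a (n + 1) (r + 1) else 0) + b (n + 1) * latticeCoeff ℓ a b n r := by
  rw [latticeCoeff, sum_range_succ', latticeCoeff, mul_sum, add_comm]
  simp only [Nat.sub_zero, prod_range_zero, mul_one, prod_range_succ', Nat.add_sub_add_right]
  congr 1
  exact sum_congr rfl fun p _ => by ring

lemma latticeCoeff_of_le {r : ℕ} (hr : r ≤ ℓ) (n : ℕ) :
    latticeCoeff ℓ a b n r = ∑ m ∈ range (r + 1), a (n - m) (r - m) * ∏ i ∈ range m, b (n - i) :=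
  sum_congr rfl fun m _ => by rw [if_pos (by omega)]

lemma latticeCoeff_add_succ (n j : ℕ) :
    latticeCoeff ℓ a b n (ℓ + j + 1) =
      ∑ m ∈ range (ℓ + 1), a (n - j - m - 1) (ℓ - m) * ∏ i ∈ range (j + m + 1), b (n - i) := by
  rw [latticeCoeff, show ℓ + j + 1 + 1 = (j + 1) + (ℓ + 1) by omega, sum_range_add,
    sum_eq_zero fun p hp => by rw [mem_range] at hp; rw [if_neg (by omega), zero_mul], zero_add]
  refine sum_congr rfl fun m hm => ?_
  rw [mem_range] at hm
  rw [if_pos (by omega), show n - (j + 1 + m) = n - j - m - 1 by omega,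
    show ℓ + j + 1 - (j + 1 + m) = ℓ - m by omega, show j + 1 + m = j + m + 1 by omega]

end Coefficients

section Recurrence

variable {R : Type*} [CommRing R] {t : ℕ} (ℓ : ℕ) (a : ℕ → ℕ → R) (b : ℕ → R)

lemma latticeM_succ_of_lt {n : ℕ} (h : n < t) (k : ℕ) : latticeM t ℓ a b n (k + 1) = 0 := by
  cases n with
  | zero => rw [latticeM, if_neg (by omega)]
  | succ n => rw [latticeM, if_pos h]

lemma latticeM_succ_succ {n : ℕ} (h : t ≤ n + 1) (k : ℕ) :
    latticeM t ℓ a b (n + 1) (k + 1) =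
      (∑ r ∈ range (n + 1 - t + 1),
          (if r ≤ ℓ then a (n + 1) r else 0) * latticeM t ℓ a b (n + 1 - t - r) k) +
        b (n + 1) * latticeM t ℓ a b n (k + 1) := by
  rw [latticeM, if_neg (by omega)]
  congr 1
  simp only [ite_mul, zero_mul, ← sum_filter]
  congr 1
  ext r
  simp only [mem_filter, mem_range]
  omega

lemma latticeM_self_succ (k : ℕ) : latticeM t ℓ a b t (k + 1) = a t 0 * latticeM t ℓ a b 0 k := by
  cases t with
  | zero => rw [latticeM, if_pos rfl]
  | succ s =>
    rw [latticeM_succ_succ ℓ a b le_rfl, latticeM_succ_of_lt ℓ a b (Nat.lt_succ_self s),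
      Nat.sub_self, sum_range_one, if_pos (Nat.zero_le ℓ), mul_zero, add_zero]

lemma latticeM_succ_eq_sum {n : ℕ} (hn : t ≤ n) (k : ℕ) :
    latticeM t ℓ a b n (k + 1) =
      ∑ r ∈ range (n - t + 1), latticeCoeff ℓ a b n r * latticeM t ℓ a b (n - t - r) k := by
  induction n, hn using Nat.le_induction with
  | base => rw [latticeM_self_succ, Nat.sub_self, sum_range_one, latticeCoeff_zero, Nat.sub_self]
  | succ n hn ih =>
    have hshift : n + 1 - t = n - t + 1 := by omega
    rw [latticeM_succ_succ ℓ a b (by omega), ih, hshift, sum_range_succ', sum_range_succ' _ (n - t + 1),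
      latticeCoeff_zero, if_pos (Nat.zero_le ℓ), mul_sum, add_right_comm, ← sum_add_distrib]
    congr 1
    refine sum_congr rfl fun r _ => ?_
    rw [latticeCoeff_succ_succ, show n - t + 1 - (r + 1) = n - t - r by omega]
    ring

end Recurrence

lemma sum_range_sub_succ_eq_add {M : Type*} [AddCommMonoid M] (g : ℕ → M) {t n : ℕ} (ℓ : ℕ)
    (h : t ≤ n) :
    ∑ r ∈ range (n - t + 1), g r =
      (∑ r ∈ range (ℓ + 1), if t + r ≤ n then g r else 0) +
        ∑ j ∈ range (n + 1), if t + ℓ + j + 1 ≤ n then g (ℓ + j + 1) else 0 := by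
  have hrange : range (n - t + 1) = (range (ℓ + 1 + (n + 1))).filter (t + · ≤ n) := by
    ext r
    simp only [mem_filter, mem_range]
    omega
  rw [hrange, sum_filter, sum_range_add]
  congr 1
  refine sum_congr rfl fun j _ => ?_
  rw [show ℓ + 1 + j = ℓ + j + 1 by omega, show t + ℓ + j + 1 = t + (ℓ + j + 1) by omega]

/-- **Proposition (second recurrence relation).**  For `n ≥ t` and `k ≥ 1`,
`M n k = Σ_{j=0}^{ℓ} (Σ_{m=0}^{j} a (n-m) (j-m) · ∏_{i=0}^{m-1} b (n-i)) · M (n-t-j) (k-1)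
       + Σ_{j=0}^{n} (Σ_{m=0}^{ℓ} a (n-j-m-1) (ℓ-m) · ∏_{i=0}^{j+m} b (n-i)) · M (n-t-ℓ-j-1) (k-1)`,
where summands whose `M`-index would be negative vanish. -/
theorem latticeM_second_recurrence {R : Type*} [CommRing R] (t ℓ : ℕ)
    (a : ℕ → ℕ → R) (b : ℕ → R) (n k : ℕ) (hn : t ≤ n) (hk : 1 ≤ k) :
    latticeM t ℓ a b n k =
      (∑ j ∈ Finset.range (ℓ + 1),
          if t + j ≤ n then
            (∑ m ∈ Finset.range (j + 1),
                a (n - m) (j - m) * ∏ i ∈ Finset.range m, b (n - i)) *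
              latticeM t ℓ a b (n - t - j) (k - 1)
          else 0) +
        ∑ j ∈ Finset.range (n + 1),
          if t + ℓ + j + 1 ≤ n then
            (∑ m ∈ Finset.range (ℓ + 1),
                a (n - j - m - 1) (ℓ - m) * ∏ i ∈ Finset.range (j + m + 1), b (n - i)) *
              latticeM t ℓ a b (n - t - ℓ - j - 1) (k - 1)
          else 0 := by
  obtain ⟨k, rfl⟩ := Nat.exists_eq_add_of_le' hk
  rw [Nat.add_sub_cancel, latticeM_succ_eq_sum ℓ a b hn, sum_range_sub_succ_eq_add _ ℓ hn]
  congr 1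
  · refine sum_congr rfl fun j hj => ?_
    rw [latticeCoeff_of_le ℓ a b (Nat.lt_succ_iff.mp (mem_range.mp hj))]
  · refine sum_congr rfl fun j _ => ?_
    rw [latticeCoeff_add_succ, show n - t - (ℓ + j + 1) = n - t - ℓ - j - 1 by omega]
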